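/- arXiv:0912.1660 — 3 statements merged into one kernel-verified Lean document; each statement's English description precedes it below -/
import Mathlib

section
/- Let f : ℝⁿ → ℝ be differentiable with ∇f Lipschitz with constant λ on a convex set K, ψ : ℝⁿ → ℝ convex, x ∈ K, α > 0, and let x⁺ be the minimizer of Φ(z) = f(x) + ⟨∇f(x), z − x⟩ + α‖z − x‖² + ψ(z). If x⁺ ∈ K and σ ∈ (0,1) with α ≥ λ/(2(1−σ)), then f(x⁺) + ψ(x⁺) ≤ f(x) + ψ(x) − σα‖x⁺ − x‖². -/
/-!
Along the segment `t ↦ x + t • (x⁺ - x)`, which stays in `K`, the Lipschitz bound on the gradient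
gives the descent lemma `f x⁺ ≤ f x + ⟪∇f x, x⁺ - x⟫ + (λ/2) ‖x⁺ - x‖²`. Comparing the model value
at its minimizer `x⁺` with its value at `x` bounds `⟪∇f x, x⁺ - x⟫ + ψ x⁺` by `ψ x - α ‖x⁺ - x‖²`,
and `λ/2 ≤ (1 - σ) α` absorbs the quadratic term.
-/

open RealInnerProductSpace Set

variable {E : Type*} [NormedAddCommGroup E] [InnerProductSpace ℝ E] [CompleteSpace E]

theorem HasGradientAt.hasDerivAt_comp_add_smul {f : E → ℝ} {f' x v : E} {t : ℝ}
    (hf : HasGradientAt f f' (x + t • v)) :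
    HasDerivAt (fun s : ℝ => f (x + s • v)) ⟪f', v⟫ t := by
  have hline : HasDerivAt (fun s : ℝ => x + s • v) v t := by
    simpa using ((hasDerivAt_id t).smul_const v).const_add x
  have := (hasGradientAt_iff_hasFDerivAt.1 hf).comp_hasDerivAt t hline
  simp only [InnerProductSpace.toDual_apply_apply] at this
  exact this

theorem le_add_inner_add_of_lipschitzOn_gradient {f : E → ℝ} {g : E → E} {K : Set E}
    (hK : Convex ℝ K) {lam : ℝ} (hf : ∀ y ∈ K, HasGradientAt f (g y) y)
    (hlip : ∀ y ∈ K, ∀ z ∈ K, ‖g y - g z‖ ≤ lam * ‖y - z‖) {x y : E} (hx : x ∈ K) (hy : y ∈ K) :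
    f y ≤ f x + ⟪g x, y - x⟫ + lam / 2 * ‖y - x‖ ^ 2 := by
  set v := y - x
  have hseg : ∀ t ∈ Icc (0 : ℝ) 1, x + t • v ∈ K := fun t ht => hK.add_smul_sub_mem hx hy ht
  have hφ : ∀ t ∈ Icc (0 : ℝ) 1,
      HasDerivAt (fun s : ℝ => f (x + s • v)) ⟪g (x + t • v), v⟫ t := fun t ht =>
    (hf _ (hseg t ht)).hasDerivAt_comp_add_smul
  have hB : ∀ t : ℝ, HasDerivAt (fun s : ℝ => f x + s * ⟪g x, v⟫ + lam / 2 * s ^ 2 * ‖v‖ ^ 2)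
      (⟪g x, v⟫ + lam * t * ‖v‖ ^ 2) t := fun t => by
    refine ((((hasDerivAt_id t).mul_const ⟪g x, v⟫).const_add (f x)).add
      (((hasDerivAt_pow 2 t).const_mul (lam / 2)).mul_const (‖v‖ ^ 2))).congr_deriv ?_
    simp only [Nat.cast_ofNat, Nat.add_one_sub_one, pow_one]
    ring
  have hbound : ∀ t ∈ Ico (0 : ℝ) 1, ⟪g (x + t • v), v⟫ ≤ ⟪g x, v⟫ + lam * t * ‖v‖ ^ 2 := by
    intro t ht
    have ht' : t ∈ Icc (0 : ℝ) 1 := Ico_subset_Icc_self ht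
    calc ⟪g (x + t • v), v⟫ = ⟪g x, v⟫ + ⟪g (x + t • v) - g x, v⟫ := by
          rw [inner_sub_left]; ring
      _ ≤ ⟪g x, v⟫ + ‖g (x + t • v) - g x‖ * ‖v‖ := by gcongr; exact real_inner_le_norm _ _
      _ ≤ ⟪g x, v⟫ + lam * ‖(x + t • v) - x‖ * ‖v‖ := by
          gcongr; exact hlip _ (hseg t ht') x hx
      _ = ⟪g x, v⟫ + lam * t * ‖v‖ ^ 2 := by
          rw [add_sub_cancel_left, norm_smul, Real.norm_of_nonneg ht.1]; ring
  have hfence := image_le_of_deriv_right_le_deriv_boundary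
    (fun t ht => (hφ t ht).continuousAt.continuousWithinAt)
    (fun t ht => (hφ t (Ico_subset_Icc_self ht)).hasDerivWithinAt) (by simp)
    (fun t _ => (hB t).continuousAt.continuousWithinAt) (fun t _ => (hB t).hasDerivWithinAt)
    hbound (right_mem_Icc.2 zero_le_one)
  simpa [v] using hfence

theorem stmt_5_general {n : ℕ} (f ψ : EuclideanSpace ℝ (Fin n) → ℝ)
    (g : EuclideanSpace ℝ (Fin n) → EuclideanSpace ℝ (Fin n))
    (hf : ∀ y, HasGradientAt f (g y) y)
    (K : Set (EuclideanSpace ℝ (Fin n))) (hK : Convex ℝ K)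
    (lam : ℝ) (hlip : ∀ y ∈ K, ∀ z ∈ K, ‖g y - g z‖ ≤ lam * ‖y - z‖)
    (x : EuclideanSpace ℝ (Fin n)) (hx : x ∈ K)
    (α σ : ℝ) (hσ : σ ∈ Set.Ioo (0:ℝ) 1)
    (xp : EuclideanSpace ℝ (Fin n)) (hxpK : xp ∈ K)
    (hxp : ∀ z, f x + ⟪g x, xp - x⟫ + α * ‖xp - x‖^2 + ψ xp ≤
                f x + ⟪g x, z - x⟫ + α * ‖z - x‖^2 + ψ z)
    (hαbig : α ≥ lam / (2 * (1 - σ))) :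
    f xp + ψ xp ≤ f x + ψ x - σ * α * ‖xp - x‖^2 := by
  have hdescent := le_add_inner_add_of_lipschitzOn_gradient hK (fun y _ => hf y) hlip hx hxpK
  have hmodel : f x + ⟪g x, xp - x⟫ + α * ‖xp - x‖ ^ 2 + ψ xp ≤ f x + ψ x := by
    simpa using hxp x
  have hlam : lam / 2 ≤ (1 - σ) * α := by
    rw [ge_iff_le, div_le_iff₀ (by linarith [hσ.2])] at hαbig
    linarith
  have hquad := mul_le_mul_of_nonneg_right hlam (sq_nonneg ‖xp - x‖)
  linarith

theorem stmt_5 {n : ℕ} (f ψ : EuclideanSpace ℝ (Fin n) → ℝ)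
    (g : EuclideanSpace ℝ (Fin n) → EuclideanSpace ℝ (Fin n))
    (hf : ∀ y, HasGradientAt f (g y) y)
    (hψ : ConvexOn ℝ Set.univ ψ)
    (K : Set (EuclideanSpace ℝ (Fin n))) (hK : Convex ℝ K)
    (lam : ℝ) (hlip : ∀ y ∈ K, ∀ z ∈ K, ‖g y - g z‖ ≤ lam * ‖y - z‖)
    (x : EuclideanSpace ℝ (Fin n)) (hx : x ∈ K)
    (α σ : ℝ) (hα : 0 < α) (hσ : σ ∈ Set.Ioo (0:ℝ) 1)
    (xp : EuclideanSpace ℝ (Fin n)) (hxpK : xp ∈ K)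
    (hxp : ∀ z, f x + ⟪g x, xp - x⟫ + α * ‖xp - x‖^2 + ψ xp ≤
                f x + ⟪g x, z - x⟫ + α * ‖z - x‖^2 + ψ z)
    (hαbig : α ≥ lam / (2 * (1 - σ))) :
    f xp + ψ xp ≤ f x + ψ x - σ * α * ‖xp - x‖^2 :=
  stmt_5_general f ψ g hf K hK lam hlip x hx α σ hσ xp hxpK hxp hαbig
end

section
/- Let f : ℝⁿ → ℝ be continuously differentiable and ψ : ℝⁿ → ℝ convex and finite everywhere. Suppose sequences (x_k), (α_k) with α_k ∈ [α_min, β] for constants 0 < α_min ≤ β < ∞, such that for each k, 0 ∈ ∇f(x_{k−1}) + 2α_k(x_k − x_{k−1}) + ∂ψ(x_k). If a subsequence x_{k_i} → x̄ with x_{k_i} − x_{k_i − 1} → 0, then 0 ∈ ∇f(x̄) + ∂ψ(x̄). -/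
open RealInnerProductSpace

/-- The convex subdifferential of `ψ` at `x`. -/
def SubdifferentialAt {n : ℕ} (ψ : EuclideanSpace ℝ (Fin n) → ℝ)
    (x : EuclideanSpace ℝ (Fin n)) : Set (EuclideanSpace ℝ (Fin n)) :=
  {p | ∀ y, ψ x + ⟪p, y - x⟫ ≤ ψ y}

open Filter Topology

theorem mem_subdifferentialAt_of_tendsto {ι : Type*} {l : Filter ι} [l.NeBot] {n : ℕ}
    {ψ : EuclideanSpace ℝ (Fin n) → ℝ} {x p : ι → EuclideanSpace ℝ (Fin n)}
    {xbar pbar : EuclideanSpace ℝ (Fin n)} (hψ : ContinuousAt ψ xbar)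
    (hx : Tendsto x l (𝓝 xbar)) (hp : Tendsto p l (𝓝 pbar))
    (hmem : ∀ᶠ i in l, p i ∈ SubdifferentialAt ψ (x i)) :
    pbar ∈ SubdifferentialAt ψ xbar := fun y =>
  le_of_tendsto ((hψ.tendsto.comp hx).add (hp.inner (tendsto_const_nhds.sub hx)))
    (hmem.mono fun _ hi => hi y)

theorem isBoundedUnder_norm_of_mem_Icc {ι : Type*} {l : Filter ι} {c : ι → ℝ} {a b : ℝ}
    (hc : ∀ i, c i ∈ Set.Icc a b) : IsBoundedUnder (· ≤ ·) l (norm ∘ c) :=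
  isBoundedUnder_of ⟨max |a| |b|, fun i => abs_le_max_abs_abs (hc i).1 (hc i).2⟩

theorem stmt_16_general {n : ℕ} (ψ : EuclideanSpace ℝ (Fin n) → ℝ)
    (g : EuclideanSpace ℝ (Fin n) → EuclideanSpace ℝ (Fin n))
    (hg : Continuous g)
    (hψ : ConvexOn ℝ Set.univ ψ)
    (x : ℕ → EuclideanSpace ℝ (Fin n)) (α : ℕ → ℝ)
    (αmin β : ℝ)
    (hα : ∀ k, α k ∈ Set.Icc αmin β)
    (hopt : ∀ k, 1 ≤ k →
      -(g (x (k - 1)) + (2 * α k) • (x k - x (k - 1))) ∈ SubdifferentialAt ψ (x k))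
    (kseq : ℕ → ℕ) (hk1 : ∀ i, 1 ≤ kseq i)
    (xbar : EuclideanSpace ℝ (Fin n))
    (hconv : Filter.Tendsto (fun i => x (kseq i)) Filter.atTop (nhds xbar))
    (hdiff : Filter.Tendsto (fun i => x (kseq i) - x (kseq i - 1))
      Filter.atTop (nhds 0)) :
    -g xbar ∈ SubdifferentialAt ψ xbar := by
  have hprev : Tendsto (fun i => x (kseq i - 1)) atTop (𝓝 xbar) := by
    simpa using hconv.sub hdiff
  have hα2 : ∀ i, 2 * α (kseq i) ∈ Set.Icc (2 * αmin) (2 * β) := fun i =>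
    ⟨by linarith [(hα (kseq i)).1], by linarith [(hα (kseq i)).2]⟩
  have hstep : Tendsto (fun i => (2 * α (kseq i)) • (x (kseq i) - x (kseq i - 1)))
      atTop (𝓝 0) :=
    (isBoundedUnder_norm_of_mem_Icc hα2).smul_tendsto_zero hdiff
  have hψc : ContinuousAt ψ xbar :=
    (hψ.continuousOn isOpen_univ).continuousAt univ_mem
  refine mem_subdifferentialAt_of_tendsto hψc hconv ?_
    (Eventually.of_forall fun i => hopt _ (hk1 i))
  simpa using (((hg.tendsto xbar).comp hprev).add hstep).neg

theorem stmt_16 {n : ℕ} (f ψ : EuclideanSpace ℝ (Fin n) → ℝ)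
    (g : EuclideanSpace ℝ (Fin n) → EuclideanSpace ℝ (Fin n))
    (hf : ∀ y, HasGradientAt f (g y) y) (hg : Continuous g)
    (hψ : ConvexOn ℝ Set.univ ψ)
    (x : ℕ → EuclideanSpace ℝ (Fin n)) (α : ℕ → ℝ)
    (αmin β : ℝ) (hαmin : 0 < αmin) (hβ : αmin ≤ β)
    (hα : ∀ k, α k ∈ Set.Icc αmin β)
    (hopt : ∀ k, 1 ≤ k →
      -(g (x (k - 1)) + (2 * α k) • (x k - x (k - 1))) ∈ SubdifferentialAt ψ (x k))
    (kseq : ℕ → ℕ) (hkmono : StrictMono kseq) (hk1 : ∀ i, 1 ≤ kseq i)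
    (xbar : EuclideanSpace ℝ (Fin n))
    (hconv : Filter.Tendsto (fun i => x (kseq i)) Filter.atTop (nhds xbar))
    (hdiff : Filter.Tendsto (fun i => x (kseq i) - x (kseq i - 1))
      Filter.atTop (nhds 0)) :
    -g xbar ∈ SubdifferentialAt ψ xbar :=
  stmt_16_general ψ g hg hψ x α αmin β hα hopt kseq hk1 xbar hconv hdiff
end

section
/- Let f : ℝⁿ → ℝ be differentiable and convex, ψ : ℝⁿ → ℝ convex, φ = f + ψ with minimizer x* and minimum φ*. Let x ∈ ℝⁿ, α ∈ (0, β], λ_f ≥ 0, and let x⁺ minimize Φ(z) = f(x) + ⟨∇f(x), z − x⟩ + α‖z − x‖² + ψ(z). Suppose the descent estimate φ(x⁺) ≤ Φ(x⁺) + (λ_f/2)‖x⁺ − x‖² holds. Then for every λ ∈ [0,1]: φ(x⁺) ≤ (1−λ)φ(x) + λφ* + βλ²‖x − x*‖² + (λ_f/2)‖x⁺ − x‖². -/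
/-! Since `xp` minimizes the model `Φ`, `φ xp ≤ Φ xp + (lamf/2)‖xp - x‖² ≤ Φ z + (lamf/2)‖xp - x‖²`
for `z = (1 - lam) x + lam xstar`. At this `z` the gradient inequality for the convex `f` and the
convexity of `ψ` give `Φ z ≤ (1 - lam) φ x + lam φ xstar + α lam² ‖x - xstar‖²`, and `α ≤ β`. -/

open RealInnerProductSpace Set AffineMap

theorem ConvexOn.add_fderiv_sub_le {E : Type*} [NormedAddCommGroup E] [NormedSpace ℝ E]
    {f : E → ℝ} {f' : E →L[ℝ] ℝ} {a : E} (hconv : ConvexOn ℝ univ f) (hf : HasFDerivAt f f' a)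
    (b : E) : f a + f' (b - a) ≤ f b := by
  have hline : ConvexOn ℝ univ (f ∘ lineMap (k := ℝ) a b) := hconv.comp_affineMap (lineMap a b)
  have hderiv : HasDerivAt (f ∘ lineMap (k := ℝ) a b) (f' (b - a)) (0 : ℝ) := by
    rw [← lineMap_apply_zero a b (k := ℝ)] at hf
    exact hf.comp_hasDerivAt 0 hasDerivAt_lineMap
  have := hline.le_slope_of_hasDerivAt (mem_univ (0 : ℝ)) (mem_univ 1) zero_lt_one hderiv
  simp only [slope_def_field, Function.comp_apply, lineMap_apply_one, lineMap_apply_zero,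
    sub_zero, div_one] at this
  linarith

theorem ConvexOn.add_inner_gradient_sub_le {E : Type*} [NormedAddCommGroup E]
    [InnerProductSpace ℝ E] [CompleteSpace E] {f : E → ℝ} {g a : E}
    (hconv : ConvexOn ℝ univ f) (hf : HasGradientAt f g a) (b : E) :
    f a + ⟪g, b - a⟫ ≤ f b := by
  simpa [InnerProductSpace.toDual_apply_apply] using hconv.add_fderiv_sub_le hf.hasFDerivAt b

/-- The left side is the paper's model `Φ` at `z = (1 - lam) • x + lam • y`. -/
theorem model_lineMap_le {E : Type*} [NormedAddCommGroup E] [InnerProductSpace ℝ E]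
    [CompleteSpace E] {f ψ : E → ℝ} {g x : E} (hf : HasGradientAt f g x)
    (hfconv : ConvexOn ℝ univ f) (hψ : ConvexOn ℝ univ ψ) (y : E) (α : ℝ) {lam : ℝ}
    (hlam : lam ∈ Icc (0 : ℝ) 1) :
    f x + ⟪g, lineMap x y lam - x⟫ + α * ‖lineMap x y lam - x‖ ^ 2 + ψ (lineMap x y lam) ≤
      (1 - lam) * (f x + ψ x) + lam * (f y + ψ y) + α * lam ^ 2 * ‖x - y‖ ^ 2 := by
  obtain ⟨hl0, hl1⟩ := hlam
  have hstep : lineMap x y lam - x = lam • (y - x) := lineMap_vsub_left x y lam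
  have hinner : ⟪g, lineMap x y lam - x⟫ = lam * ⟪g, y - x⟫ := by
    rw [hstep, real_inner_smul_right]
  have hnorm : ‖lineMap x y lam - x‖ ^ 2 = lam ^ 2 * ‖x - y‖ ^ 2 := by
    rw [hstep, norm_smul, norm_sub_rev, mul_pow, Real.norm_eq_abs, sq_abs]
  have hψseg : ψ (lineMap x y lam) ≤ (1 - lam) * ψ x + lam * ψ y := by
    rw [lineMap_apply_module]
    exact hψ.2 (mem_univ x) (mem_univ y) (by linarith) hl0 (by ring)
  have hgrad : f x + ⟪g, y - x⟫ ≤ f y := hfconv.add_inner_gradient_sub_le hf y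
  rw [hinner, hnorm]
  nlinarith [mul_le_mul_of_nonneg_left hgrad hl0]

theorem stmt_17_general {n : ℕ} (f ψ : EuclideanSpace ℝ (Fin n) → ℝ)
    (g : EuclideanSpace ℝ (Fin n) → EuclideanSpace ℝ (Fin n))
    (hf : ∀ y, HasGradientAt f (g y) y)
    (hfconv : ConvexOn ℝ Set.univ f) (hψ : ConvexOn ℝ Set.univ ψ)
    (xstar : EuclideanSpace ℝ (Fin n))
    (x : EuclideanSpace ℝ (Fin n)) (α β lamf : ℝ)
    (hαβ : α ≤ β)
    (xp : EuclideanSpace ℝ (Fin n))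
    (hxp : ∀ z, f x + ⟪g x, xp - x⟫ + α * ‖xp - x‖^2 + ψ xp ≤
                f x + ⟪g x, z - x⟫ + α * ‖z - x‖^2 + ψ z)
    (hdescent : f xp + ψ xp ≤
      (f x + ⟪g x, xp - x⟫ + α * ‖xp - x‖^2 + ψ xp) + (lamf / 2) * ‖xp - x‖^2) :
    ∀ lam : ℝ, lam ∈ Set.Icc (0:ℝ) 1 →
      f xp + ψ xp ≤ (1 - lam) * (f x + ψ x) + lam * (f xstar + ψ xstar)
        + β * lam^2 * ‖x - xstar‖^2 + (lamf / 2) * ‖xp - x‖^2 := by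
  intro lam hlam
  have hmodel := model_lineMap_le (hf x) hfconv hψ xstar α hlam
  have hαβ' : α * lam ^ 2 * ‖x - xstar‖ ^ 2 ≤ β * lam ^ 2 * ‖x - xstar‖ ^ 2 := by gcongr
  linarith [hxp (lineMap x xstar lam)]

theorem stmt_17 {n : ℕ} (f ψ : EuclideanSpace ℝ (Fin n) → ℝ)
    (g : EuclideanSpace ℝ (Fin n) → EuclideanSpace ℝ (Fin n))
    (hf : ∀ y, HasGradientAt f (g y) y)
    (hfconv : ConvexOn ℝ Set.univ f) (hψ : ConvexOn ℝ Set.univ ψ)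
    (xstar : EuclideanSpace ℝ (Fin n))
    (hmin : ∀ y, f xstar + ψ xstar ≤ f y + ψ y)
    (x : EuclideanSpace ℝ (Fin n)) (α β lamf : ℝ)
    (hα : 0 < α) (hαβ : α ≤ β) (hlamf : 0 ≤ lamf)
    (xp : EuclideanSpace ℝ (Fin n))
    (hxp : ∀ z, f x + ⟪g x, xp - x⟫ + α * ‖xp - x‖^2 + ψ xp ≤
                f x + ⟪g x, z - x⟫ + α * ‖z - x‖^2 + ψ z)
    (hdescent : f xp + ψ xp ≤
      (f x + ⟪g x, xp - x⟫ + α * ‖xp - x‖^2 + ψ xp) + (lamf / 2) * ‖xp - x‖^2) :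
    ∀ lam : ℝ, lam ∈ Set.Icc (0:ℝ) 1 →
      f xp + ψ xp ≤ (1 - lam) * (f x + ψ x) + lam * (f xstar + ψ xstar)
        + β * lam^2 * ‖x - xstar‖^2 + (lamf / 2) * ‖xp - x‖^2 :=
  stmt_17_general f ψ g hf hfconv hψ xstar x α β lamf hαβ xp hxp hdescent
end
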